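/- arXiv:2310.03875 — 6 statements merged into one kernel-verified Lean document; each statement's English description precedes it below -/
import Mathlib

section
/- Let X be a second-countable topological space, W ⊆ X open and 𝒰 an open cover of W. Given Borel measures μ_U on each U ∈ 𝒰 satisfying the compatibility condition μ_U|_{U∩V} = μ_V|_{U∩V} for all U, V ∈ 𝒰, there exists a Borel measure μ on W such that μ|_U = μ_U for all U ∈ 𝒰. -/
/-!
Push each `μ_U` forward to a measure `ν_U` on `W`; compatibility says that `ν_U` and `ν_V` agree
on `U ∩ V`. By second countability countably many members `U₀, U₁, …` of the cover already cover
`W`, and the glued measure is `∑ₙ ν_{Uₙ}` restricted to the disjoint pieces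
`Uₙ \ (U₀ ∪ ⋯ ∪ Uₙ₋₁)`: on a member `U` of the cover it agrees with `ν_U` piece by piece.
-/

open MeasureTheory Set

/-- Restriction of a Borel measure on `U` to an open subset `V ⊆ U`. -/
noncomputable def restrictMeas {X : Type*} [MeasurableSpace X]
    {U V : Set X} (h : V ⊆ U) (μ : Measure U) : Measure V :=
  Measure.comap (Set.inclusion h) μ
namespace MeasureTheory.Measure

variable {α : Type*} [MeasurableSpace α]

theorem restrict_sum_restrict_disjointed {f : ℕ → Set α} (hf : ∀ n, MeasurableSet (f n))
    {ν : ℕ → Measure α} {ρ : Measure α} {s : Set α} (hs : MeasurableSet s)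
    (hsf : s ⊆ ⋃ n, f n) (h : ∀ n, ρ.restrict (s ∩ f n) = (ν n).restrict (s ∩ f n)) :
    (sum fun n => (ν n).restrict (disjointed f n)).restrict s = ρ.restrict s := by
  have hD := MeasurableSet.disjointed hf
  have hinter : ∀ n, disjointed f n ∩ (s ∩ f n) = s ∩ disjointed f n := fun n => by
    rw [← inter_assoc, inter_comm _ s, inter_assoc, inter_eq_left.2 (disjointed_subset f n)]
  calc (sum fun n => (ν n).restrict (disjointed f n)).restrict s
      = sum fun n => ((ν n).restrict (s ∩ f n)).restrict (disjointed f n) := by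
        simp only [restrict_sum_of_countable, restrict_restrict hs, restrict_restrict (hD _),
          hinter]
    _ = sum fun n => (ρ.restrict (s ∩ f n)).restrict (disjointed f n) := by simp only [h]
    _ = ρ.restrict (⋃ n, s ∩ disjointed f n) := by
        simp only [restrict_restrict (hD _), hinter]
        exact (restrict_iUnion ((disjoint_disjointed f).mono fun _ _ =>
          Disjoint.mono inter_subset_right inter_subset_right) fun n => hs.inter (hD n)).symm
    _ = ρ.restrict s := by rw [← inter_iUnion, iUnion_disjointed, inter_eq_left.2 hsf]

end MeasureTheory.Measure

theorem MeasurableEmbedding.map_comp_comap {α β γ : Type*} [MeasurableSpace α]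
    [MeasurableSpace β] [MeasurableSpace γ] {e : β → γ} {j : α → β}
    (he : MeasurableEmbedding e) (hj : MeasurableEmbedding j) (μ : Measure β) :
    (μ.comap j).map (e ∘ j) = (μ.map e).restrict (range (e ∘ j)) := by
  rw [← Measure.map_map he.measurable hj.measurable, hj.map_comap, he.restrict_map, range_comp,
    he.injective.preimage_image]

theorem MeasurableEmbedding.inclusion {α : Type*} [MeasurableSpace α] {s t : Set α}
    (hs : MeasurableSet s) (h : s ⊆ t) : MeasurableEmbedding (inclusion h) :=
  ⟨inclusion_injective h, measurable_inclusion h, fun _ hu => .image_inclusion h hs hu⟩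

theorem TopologicalSpace.exists_seq_mem_iUnion_eq_sUnion {X : Type*} [TopologicalSpace X]
    [SecondCountableTopology X] {𝒰 : Set (Set X)} (hne : 𝒰.Nonempty)
    (hopen : ∀ U ∈ 𝒰, IsOpen U) : ∃ g : ℕ → Set X, (∀ n, g n ∈ 𝒰) ∧ ⋃ n, g n = ⋃₀ 𝒰 := by
  obtain ⟨U₀, hU₀⟩ := hne
  obtain ⟨T, hTc, hT𝒰, hTU⟩ := isOpen_sUnion_countable 𝒰 hopen
  obtain ⟨g, hg⟩ := (hTc.insert U₀).exists_eq_range (insert_nonempty U₀ T)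
  refine ⟨g, fun n => insert_subset hU₀ hT𝒰 (hg ▸ mem_range_self n), ?_⟩
  rw [← sUnion_range, ← hg, sUnion_insert, hTU, union_eq_right.2 (subset_sUnion_of_mem hU₀)]

section restrictMeas

variable {X : Type*} [MeasurableSpace X] {U V W : Set X}

theorem map_inclusion_restrictMeas (hV : MeasurableSet V) (hU : MeasurableSet U) (hVU : V ⊆ U)
    (hUW : U ⊆ W) (μ : Measure U) :
    (restrictMeas hVU μ).map (inclusion (hVU.trans hUW)) =
      (μ.map (inclusion hUW)).restrict ((↑) ⁻¹' V) := by
  rw [restrictMeas, ← inclusion_comp_inclusion hVU hUW,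
    (MeasurableEmbedding.inclusion hU hUW).map_comp_comap (.inclusion hV hVU),
    inclusion_comp_inclusion, range_inclusion]
  rfl

theorem restrictMeas_eq_iff (hU : MeasurableSet U) (hUW : U ⊆ W) {μ : Measure W}
    {μU : Measure U} :
    restrictMeas hUW μ = μU ↔
      μ.restrict ((↑) ⁻¹' U) = (μU.map (inclusion hUW)).restrict ((↑) ⁻¹' U) := by
  have e := MeasurableEmbedding.inclusion hU hUW
  have hrange : (μU.map (inclusion hUW)).restrict (range (inclusion hUW)) =
      μU.map (inclusion hUW) := by
    rw [← e.map_comap, e.comap_map]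
  rw [← e.map_injective.eq_iff, restrictMeas, e.map_comap]
  nth_rw 1 [← hrange]
  rw [range_inclusion]
  rfl

end restrictMeas

theorem stmt2_general {X : Type*} [TopologicalSpace X] [SecondCountableTopology X]
    [MeasurableSpace X] [BorelSpace X]
    (W : Set X) (𝒰 : Set (Set X))
    (hopen : ∀ U ∈ 𝒰, IsOpen U) (hsub : ∀ U ∈ 𝒰, U ⊆ W) (hcov : W ⊆ ⋃₀ 𝒰)
    (μf : ∀ U, U ∈ 𝒰 → Measure U)
    (hcompat : ∀ U V (hU : U ∈ 𝒰) (hV : V ∈ 𝒰),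
      restrictMeas (inter_subset_left : U ∩ V ⊆ U) (μf U hU) =
        restrictMeas (inter_subset_right : U ∩ V ⊆ V) (μf V hV)) :
    ∃ μ : Measure W, ∀ U (hU : U ∈ 𝒰), restrictMeas (hsub U hU) μ = μf U hU := by
  rcases 𝒰.eq_empty_or_nonempty with rfl | hne
  · exact ⟨0, fun U hU => hU.elim⟩
  have hmeas U (hU : U ∈ 𝒰) : MeasurableSet U := (hopen U hU).measurableSet
  let ν U (hU : U ∈ 𝒰) : Measure W := (μf U hU).map (inclusion (hsub U hU))
  have hνcompat U V (hU : U ∈ 𝒰) (hV : V ∈ 𝒰) :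
      (ν U hU).restrict ((↑) ⁻¹' (U ∩ V)) = (ν V hV).restrict ((↑) ⁻¹' (U ∩ V)) := by
    have := congrArg (Measure.map (inclusion (inter_subset_left.trans (hsub U hU))))
      (hcompat U V hU hV)
    rwa [map_inclusion_restrictMeas ((hmeas U hU).inter (hmeas V hV)) (hmeas U hU),
      map_inclusion_restrictMeas ((hmeas U hU).inter (hmeas V hV)) (hmeas V hV)] at this
  obtain ⟨g, hg, hgU⟩ := TopologicalSpace.exists_seq_mem_iUnion_eq_sUnion hne hopen
  have hgW : (univ : Set W) ⊆ ⋃ n, (↑) ⁻¹' g n := fun x _ => by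
    simpa [← preimage_iUnion, hgU] using hcov x.2
  refine ⟨Measure.sum fun n => (ν (g n) (hg n)).restrict (disjointed (fun n => (↑) ⁻¹' g n) n),
    fun U hU => (restrictMeas_eq_iff (hmeas U hU) _).2 ?_⟩
  exact Measure.restrict_sum_restrict_disjointed (fun n => measurable_subtype_coe (hmeas _ (hg n)))
    (measurable_subtype_coe (hmeas U hU)) ((subset_univ _).trans hgW) fun n => hνcompat U (g n) hU (hg n)

/-- Gluing: on a second-countable space, a compatible family of Borel measures on the members
of an open cover of an open set `W` glues to a Borel measure on `W`. -/
theorem stmt2 {X : Type*} [TopologicalSpace X] [SecondCountableTopology X]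
    [MeasurableSpace X] [BorelSpace X]
    (W : Set X) (hW : IsOpen W) (𝒰 : Set (Set X))
    (hopen : ∀ U ∈ 𝒰, IsOpen U) (hsub : ∀ U ∈ 𝒰, U ⊆ W) (hcov : W ⊆ ⋃₀ 𝒰)
    (μf : ∀ U, U ∈ 𝒰 → Measure U)
    (hcompat : ∀ U V (hU : U ∈ 𝒰) (hV : V ∈ 𝒰),
      restrictMeas (inter_subset_left : U ∩ V ⊆ U) (μf U hU) =
        restrictMeas (inter_subset_right : U ∩ V ⊆ V) (μf V hV)) :
    ∃ μ : Measure W, ∀ U (hU : U ∈ 𝒰), restrictMeas (hsub U hU) μ = μf U hU :=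
  stmt2_general W 𝒰 hopen hsub hcov μf hcompat
end

section
/- Let X be a second-countable locally compact Hausdorff space, W ⊆ X open, and 𝒰 an open cover of W. Given regular Borel measures μ_U on each U ∈ 𝒰 (regular meaning inner regular, outer regular and finite on compact sets) satisfying μ_U|_{U∩V} = μ_V|_{U∩V} for all U, V ∈ 𝒰, the unique Borel measure μ on W with μ|_U = μ_U for all U ∈ 𝒰 is itself regular; in particular μ is finite on compact subsets of W. -/
/-!
On the second-countable locally compact Hausdorff space `W`, every locally finite Borel measure
is regular and inner regular, so it suffices to show that the glued measure `μ` is locally finite.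
A point of `W` lies in some `U ∈ 𝒰`, where it has an open neighbourhood of finite `μ_U`-measure
(`μ_U` is finite on compacts and `U` is locally compact); since `U` is open, the same set is open
in `W`, and there its `μ`-measure is its `μ_U`-measure.
-/

open MeasureTheory Set

section

variable {X : Type*} [MeasurableSpace X]

theorem restrictMeas_apply {U V : Set X} (hV : MeasurableSet V) (h : V ⊆ U) (μ : Measure U)
    {s : Set V} (hs : MeasurableSet s) : restrictMeas h μ s = μ (inclusion h '' s) :=
  Measure.comap_apply _ (inclusion_injective h)
    (fun _ ht => MeasurableSet.image_inclusion h hV ht) μ hs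

variable [TopologicalSpace X] [OpensMeasurableSpace X]

theorem isLocallyFiniteMeasure_of_restrictMeas {W : Set X} (μ : Measure W)
    (h : ∀ x ∈ W, ∃ U, ∃ hUW : U ⊆ W,
      IsOpen U ∧ x ∈ U ∧ IsLocallyFiniteMeasure (restrictMeas hUW μ)) :
    IsLocallyFiniteMeasure μ := by
  refine ⟨fun x => ?_⟩
  obtain ⟨U, hUW, hU, hxU, _⟩ := h x x.2
  obtain ⟨t, hxt, ht, hμt⟩ := (restrictMeas hUW μ).exists_isOpen_measure_lt_top ⟨x, hxU⟩
  refine ⟨inclusion hUW '' t, (hU.isOpenMap_inclusion hUW t ht).mem_nhds ⟨_, hxt, rfl⟩, ?_⟩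
  rwa [← restrictMeas_apply hU.measurableSet hUW μ ht.measurableSet]

end

theorem stmt4_general {X : Type*} [TopologicalSpace X] [SecondCountableTopology X]
    [T2Space X] [LocallyCompactSpace X] [MeasurableSpace X] [BorelSpace X]
    (W : Set X) (hW : IsOpen W) (𝒰 : Set (Set X))
    (hopen : ∀ U ∈ 𝒰, IsOpen U) (hsub : ∀ U ∈ 𝒰, U ⊆ W) (hcov : W ⊆ ⋃₀ 𝒰)
    (μf : ∀ U, U ∈ 𝒰 → Measure U)
    (hreg : ∀ U (hU : U ∈ 𝒰), (μf U hU).Regular ∧ (μf U hU).InnerRegular)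
    (μ : Measure W)
    (hglue : ∀ U (hU : U ∈ 𝒰), restrictMeas (hsub U hU) μ = μf U hU) :
    μ.Regular ∧ μ.InnerRegular ∧ ∀ K : Set W, IsCompact K → μ K < ⊤ := by
  have : LocallyCompactSpace W := hW.locallyCompactSpace
  have : IsLocallyFiniteMeasure μ := by
    refine isLocallyFiniteMeasure_of_restrictMeas μ fun x hx => ?_
    obtain ⟨U, hU, hxU⟩ := hcov hx
    have : LocallyCompactSpace U := (hopen U hU).locallyCompactSpace
    have := (hreg U hU).1
    exact ⟨U, hsub U hU, hopen U hU, hxU, hglue U hU ▸ inferInstance⟩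
  exact ⟨inferInstance, inferInstance, fun K hK => hK.measure_lt_top⟩

/-- On a second-countable locally compact Hausdorff space, a Borel measure on an open set `W`
glued from a compatible family of regular Borel measures on an open cover is itself regular;
in particular it is finite on compact subsets of `W`. -/
theorem stmt4 {X : Type*} [TopologicalSpace X] [SecondCountableTopology X]
    [T2Space X] [LocallyCompactSpace X] [MeasurableSpace X] [BorelSpace X]
    (W : Set X) (hW : IsOpen W) (𝒰 : Set (Set X))
    (hopen : ∀ U ∈ 𝒰, IsOpen U) (hsub : ∀ U ∈ 𝒰, U ⊆ W) (hcov : W ⊆ ⋃₀ 𝒰)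
    (μf : ∀ U, U ∈ 𝒰 → Measure U)
    (hreg : ∀ U (hU : U ∈ 𝒰), (μf U hU).Regular ∧ (μf U hU).InnerRegular)
    (hcompat : ∀ U V (hU : U ∈ 𝒰) (hV : V ∈ 𝒰),
      restrictMeas (inter_subset_left : U ∩ V ⊆ U) (μf U hU) =
        restrictMeas (inter_subset_right : U ∩ V ⊆ V) (μf V hV))
    (μ : Measure W)
    (hglue : ∀ U (hU : U ∈ 𝒰), restrictMeas (hsub U hU) μ = μf U hU) :
    μ.Regular ∧ μ.InnerRegular ∧ ∀ K : Set W, IsCompact K → μ K < ⊤ :=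
  stmt4_general W hW 𝒰 hopen hsub hcov μf hreg μ hglue
end

section
/- Let f : X → Y be a local homeomorphism between second-countable locally compact Hausdorff spaces and μ a regular Borel measure on Y. Then there exists a unique regular Borel measure f*μ on X such that (f*μ)(B) = μ(f(B)) for every Borel subset B ⊆ U whenever U ⊆ X is an open set on which f is injective. -/
/-!
Cover `X` by a sequence of open sets `Uₙ` on which `f` is injective and make it disjoint,
`Bₙ = Uₙ \ ⋃_{m<n} Uₘ`. Any pullback must satisfy `ν A = ∑ₙ μ (f '' (A ∩ Bₙ))`, which gives
uniqueness; conversely the right-hand side is a sum of measures, and it is a pullback because on a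
set where `f` is injective the images `f '' (A ∩ Bₙ)` are disjoint. A compact set is covered by
finitely many open sets on which `f` is injective, so the pullback of a measure finite on compacts
is finite on compacts, which in a second-countable locally compact Hausdorff space means regular.
-/

open MeasureTheory Set

/-- `ν` is the (sheaf-theoretic) pullback of `μ` along `f`: on every Borel subset `B` of an
open set `U` on which `f` is injective, `ν B = μ (f '' B)`. -/
def IsPullback {X Y : Type*} [TopologicalSpace X] [TopologicalSpace Y]
    [MeasurableSpace X] [MeasurableSpace Y] (f : X → Y)
    (ν : Measure X) (μ : Measure Y) : Prop :=
  ∀ U : Set X, IsOpen U → Set.InjOn f U →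
    ∀ B : Set X, B ⊆ U → MeasurableSet B → ν B = μ (f '' B)

open Topology

section

variable {X Y : Type*} [TopologicalSpace X] [TopologicalSpace Y] {f : X → Y}

namespace IsLocalHomeomorph

lemma exists_isOpen_injOn (hf : IsLocalHomeomorph f) (x : X) :
    ∃ U, IsOpen U ∧ x ∈ U ∧ InjOn f U := by
  obtain ⟨e, hx, rfl⟩ := hf x
  exact ⟨e.source, e.open_source, hx, e.injOn⟩

lemma exists_seq_isOpen_injOn_cover [LindelofSpace X] (hf : IsLocalHomeomorph f) :
    ∃ U : ℕ → Set X, (∀ n, IsOpen (U n)) ∧ (∀ n, InjOn f (U n)) ∧ ⋃ n, U n = univ := by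
  rcases isEmpty_or_nonempty X with hX | hX
  · exact ⟨fun _ ↦ ∅, fun _ ↦ isOpen_empty, fun _ ↦ injOn_empty f, Subsingleton.elim _ _⟩
  choose W hW hxW hWinj using hf.exists_isOpen_injOn
  obtain ⟨t, htc, -, hcov⟩ :=
    isLindelof_univ.elim_nhds_subcover W fun x _ ↦ (hW x).mem_nhds (hxW x)
  obtain ⟨g, htg⟩ := countable_iff_exists_subset_range.mp htc
  refine ⟨W ∘ g, fun n ↦ hW _, fun n ↦ hWinj _, eq_univ_of_univ_subset ?_⟩
  refine hcov.trans (iUnion₂_subset fun x hx ↦ ?_)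
  obtain ⟨n, rfl⟩ := htg hx
  exact subset_iUnion (W ∘ g) n

lemma isOpenEmbedding_domRestrict (hf : IsLocalHomeomorph f) {U : Set X} (hU : IsOpen U)
    (hinj : InjOn f U) : IsOpenEmbedding (U.domRestrict f) :=
  (hf.comp hU.isOpenEmbedding_subtypeVal.isLocalHomeomorph).isOpenEmbedding_of_injective
    (injOn_iff_injective.mp hinj)

variable [MeasurableSpace X] [BorelSpace X] [MeasurableSpace Y] [BorelSpace Y]

lemma measurableSet_image (hf : IsLocalHomeomorph f) {U B : Set X} (hU : IsOpen U)
    (hinj : InjOn f U) (hB : MeasurableSet B) (hBU : B ⊆ U) : MeasurableSet (f '' B) := by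
  rw [← inter_eq_left.mpr hBU, ← image_domRestrict]
  exact (hf.isOpenEmbedding_domRestrict hU hinj).measurableEmbedding.measurableSet_image'
    (measurable_subtype_coe hB)

end IsLocalHomeomorph

section Pullback

variable [MeasurableSpace X] [MeasurableSpace Y] {μ : Measure Y} {U : ℕ → Set X}

lemma IsPullback.apply_eq_tsum [OpensMeasurableSpace X] {ν : Measure X}
    (hν : IsPullback f ν μ) (hU : ∀ n, IsOpen (U n)) (hinj : ∀ n, InjOn f (U n))
    (hcov : ⋃ n, U n = univ) {A : Set X} (hA : MeasurableSet A) :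
    ν A = ∑' n, μ (f '' (A ∩ disjointed U n)) := by
  have hmeas n : MeasurableSet (A ∩ disjointed U n) :=
    hA.inter (.disjointed (fun n ↦ (hU n).measurableSet) n)
  calc ν A = ν (⋃ n, A ∩ disjointed U n) := by
        rw [← inter_iUnion, iUnion_disjointed, hcov, inter_univ]
    _ = ∑' n, ν (A ∩ disjointed U n) :=
        measure_iUnion (fun i j hij ↦ (disjoint_disjointed U hij).mono inter_subset_right
          inter_subset_right) hmeas
    _ = ∑' n, μ (f '' (A ∩ disjointed U n)) := tsum_congr fun n ↦
        hν _ (hU n) (hinj n) _ (inter_subset_right.trans (disjointed_subset U n)) (hmeas n)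

lemma IsPullback.unique [OpensMeasurableSpace X] {ν₁ ν₂ : Measure X}
    (h₁ : IsPullback f ν₁ μ) (h₂ : IsPullback f ν₂ μ) (hU : ∀ n, IsOpen (U n))
    (hinj : ∀ n, InjOn f (U n)) (hcov : ⋃ n, U n = univ) : ν₁ = ν₂ :=
  Measure.ext fun _ hA ↦
    (h₁.apply_eq_tsum hU hinj hcov hA).trans (h₂.apply_eq_tsum hU hinj hcov hA).symm

lemma IsPullback.isFiniteMeasureOnCompacts [T2Space X] [OpensMeasurableSpace X]
    [IsFiniteMeasureOnCompacts μ] {ν : Measure X} (hf : IsLocalHomeomorph f)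
    (hν : IsPullback f ν μ) : IsFiniteMeasureOnCompacts ν := by
  refine ⟨fun K hK ↦ ?_⟩
  choose W hW hxW hWinj using hf.exists_isOpen_injOn
  obtain ⟨t, -, hKt⟩ := hK.elim_nhds_subcover W fun x _ ↦ (hW x).mem_nhds (hxW x)
  have hKW x : ν (K ∩ W x) = μ (f '' (K ∩ W x)) :=
    hν _ (hW x) (hWinj x) _ inter_subset_right (hK.measurableSet.inter (hW x).measurableSet)
  calc ν K = ν (⋃ x ∈ t, K ∩ W x) := by rw [← inter_iUnion₂, inter_eq_left.mpr hKt]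
    _ ≤ ∑ x ∈ t, ν (K ∩ W x) := measure_biUnion_finset_le t _
    _ ≤ ∑ x ∈ t, μ (f '' K) := Finset.sum_le_sum fun x _ ↦
        (hKW x).trans_le (measure_mono (image_mono inter_subset_left))
    _ < ⊤ := ENNReal.sum_lt_top.mpr fun x _ ↦ (hK.image hf.continuous).measure_lt_top

noncomputable def pullbackMeasure (f : X → Y) (U : ℕ → Set X) (μ : Measure Y) : Measure X :=
  Measure.sum fun n ↦ ((μ.comap ((U n).domRestrict f)).map (↑)).restrict (disjointed U n)

variable [BorelSpace X] [BorelSpace Y]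

lemma pullbackMeasure_apply (hf : IsLocalHomeomorph f) (hU : ∀ n, IsOpen (U n))
    (hinj : ∀ n, InjOn f (U n)) {A : Set X} (hA : MeasurableSet A) :
    pullbackMeasure f U μ A = ∑' n, μ (f '' (A ∩ disjointed U n)) := by
  rw [pullbackMeasure, Measure.sum_apply _ hA]
  refine tsum_congr fun n ↦ ?_
  have hAn : MeasurableSet (A ∩ disjointed U n) :=
    hA.inter (.disjointed (fun n ↦ (hU n).measurableSet) n)
  rw [Measure.restrict_apply hA, Measure.map_apply measurable_subtype_coe hAn,
    (hf.isOpenEmbedding_domRestrict (hU n) (hinj n)).measurableEmbedding.comap_apply,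
    image_domRestrict, inter_eq_left.mpr (inter_subset_right.trans (disjointed_subset U n))]

lemma isPullback_pullbackMeasure (hf : IsLocalHomeomorph f) (hU : ∀ n, IsOpen (U n))
    (hinj : ∀ n, InjOn f (U n)) (hcov : ⋃ n, U n = univ) :
    IsPullback f (pullbackMeasure f U μ) μ := by
  intro V _ hVinj A hAV hA
  rw [pullbackMeasure_apply hf hU hinj hA, ← measure_iUnion, ← image_iUnion, ← inter_iUnion,
    iUnion_disjointed, hcov, inter_univ]
  · exact fun i j hij ↦ ((disjoint_disjointed U hij).mono inter_subset_right
      inter_subset_right).image hVinj (inter_subset_left.trans hAV) (inter_subset_left.trans hAV)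
  · exact fun n ↦ hf.measurableSet_image (hU n) (hinj n)
      (hA.inter (.disjointed (fun n ↦ (hU n).measurableSet) n))
      (inter_subset_right.trans (disjointed_subset U n))

end Pullback

end

theorem stmt5_general {X Y : Type*} [TopologicalSpace X] [TopologicalSpace Y]
    [SecondCountableTopology X]
    [T2Space X] [LocallyCompactSpace X]
    [MeasurableSpace X] [BorelSpace X] [MeasurableSpace Y] [BorelSpace Y]
    (f : X → Y) (hf : IsLocalHomeomorph f) (μ : Measure Y) (hμ : μ.Regular) :
    ∃! ν : Measure X, ν.Regular ∧ IsPullback f ν μ := by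
  obtain ⟨U, hU, hinj, hcov⟩ := hf.exists_seq_isOpen_injOn_cover
  have hpull : IsPullback f (pullbackMeasure f U μ) μ := isPullback_pullbackMeasure hf hU hinj hcov
  have : IsFiniteMeasureOnCompacts (pullbackMeasure f U μ) := hpull.isFiniteMeasureOnCompacts hf
  exact ⟨_, ⟨inferInstance, hpull⟩, fun ν hν ↦ hν.2.unique hpull hU hinj hcov⟩

/-- Pullback of a regular Borel measure along a local homeomorphism between second-countable
locally compact Hausdorff spaces: existence and uniqueness. -/
theorem stmt5 {X Y : Type*} [TopologicalSpace X] [TopologicalSpace Y]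
    [SecondCountableTopology X] [SecondCountableTopology Y]
    [T2Space X] [T2Space Y] [LocallyCompactSpace X] [LocallyCompactSpace Y]
    [MeasurableSpace X] [BorelSpace X] [MeasurableSpace Y] [BorelSpace Y]
    (f : X → Y) (hf : IsLocalHomeomorph f) (μ : Measure Y) (hμ : μ.Regular) :
    ∃! ν : Measure X, ν.Regular ∧ IsPullback f ν μ :=
  stmt5_general f hf μ hμ
end

section
/- Let φ : X → Y be a local homeomorphism between second-countable locally compact Hausdorff spaces and μ a regular Borel measure on Y. If ν is a regular Borel measure on X satisfying ∫_X f dν = ∫_Y Σ_{x∈φ⁻¹(y)} f(x) dμ(y) for all f ∈ C_c(X), then ν(B) = μ(φ(B)) for every Borel set B contained in an open set U ⊆ X on which φ is injective. In particular the Riesz-representation pullback coincides with the sheaf-theoretic pullback of μ along φ. -/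
/-!
On an open set `U` on which `φ` is injective, `φ` restricts to an open embedding `U → Y`. For
`g ∈ C_c(U)` extended by zero to `X`, the fibre sum over `φ⁻¹(y)` is just `g` transported to
`φ(U)` and extended by zero, so the hypothesis says that `ν` and `μ`, both pulled back to `U`,
integrate every `g ∈ C_c(U)` alike. Pullbacks of regular measures along open embeddings are
regular, hence the two measures on `U` coincide by the uniqueness part of Riesz–Markov–Kakutani,
and evaluating them on `B ⊆ U` gives `ν B = μ (φ '' B)`.
-/

open MeasureTheory Set

open Function Topology

theorem IsLocalHomeomorph.isOpenEmbedding_domRestrict_s7 {X Y : Type*} [TopologicalSpace X]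
    [TopologicalSpace Y] {f : X → Y} (hf : IsLocalHomeomorph f) {U : Set X} (hU : IsOpen U)
    (hinj : InjOn f U) : IsOpenEmbedding (U.domRestrict f) :=
  .of_continuous_injective_isOpenMap (hf.continuous.comp continuous_subtype_val)
    hinj.injective (hf.isOpenMap.comp hU.isOpenMap_subtype_val)

theorem MeasurableEmbedding.integral_comap_eq_integral_extend {Z Y E : Type*}
    [MeasurableSpace Z] [MeasurableSpace Y] [NormedAddCommGroup E] [NormedSpace ℝ E]
    {e : Z → Y} (he : MeasurableEmbedding e) (μ : Measure Y) (g : Z → E) :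
    ∫ z, g z ∂μ.comap e = ∫ y, extend e g 0 y ∂μ :=
  calc ∫ z, g z ∂μ.comap e = ∫ z, extend e g 0 (e z) ∂μ.comap e := by
        simp only [he.injective.extend_apply]
    _ = ∫ y in range e, extend e g 0 y ∂μ := by rw [← he.integral_map, he.map_comap]
    _ = ∫ y, extend e g 0 y ∂μ :=
        setIntegral_eq_integral_of_forall_compl_eq_zero fun _ hy ↦ extend_apply' _ _ _ hy

theorem tsum_fiber_extend_subtype_val {X Y E : Type*} [AddCommMonoid E] [TopologicalSpace E]
    {f : X → Y} {U : Set X} (hinj : InjOn f U) (g : U → E) (y : Y) :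
    ∑' x : f ⁻¹' {y}, extend ((↑) : U → X) g 0 x = extend (U.domRestrict f) g 0 y := by
  have hzero : ∀ x ∉ U, extend ((↑) : U → X) g 0 x = 0 := fun x hx ↦
    extend_apply' _ _ _ fun ⟨u, hu⟩ ↦ hx (hu ▸ u.2)
  by_cases hy : ∃ u : U, U.domRestrict f u = y
  · obtain ⟨u, rfl⟩ := hy
    rw [hinj.injective.extend_apply, tsum_eq_single ⟨u, rfl⟩, Subtype.val_injective.extend_apply]
    rintro ⟨x, hx⟩ hne
    by_cases hxU : x ∈ U
    · exact absurd (Subtype.ext (hinj hxU u.2 hx)) hne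
    · exact hzero x hxU
  · rw [extend_apply' _ _ _ hy]
    exact (tsum_congr fun (x : f ⁻¹' {y}) ↦ hzero x fun hxU ↦ hy ⟨⟨x, hxU⟩, x.2⟩).trans tsum_zero

theorem comap_subtype_val_eq_comap_domRestrict {X Y : Type*} [TopologicalSpace X]
    [TopologicalSpace Y] [T2Space X] [LocallyCompactSpace X] [MeasurableSpace X] [BorelSpace X]
    [MeasurableSpace Y] [BorelSpace Y] {φ : X → Y} (hφ : IsLocalHomeomorph φ)
    (μ : Measure Y) [μ.Regular] (ν : Measure X) [ν.Regular]
    (hint : ∀ f : X → ℂ, Continuous f → HasCompactSupport f →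
      ∫ x, f x ∂ν = ∫ y, ∑' x : (φ ⁻¹' {y}), f (x : X) ∂μ)
    {U : Set X} (hU : IsOpen U) (hinj : InjOn φ U) :
    ν.comap ((↑) : U → X) = μ.comap (U.domRestrict φ) := by
  have := hU.locallyCompactSpace
  have hval := hU.isOpenEmbedding_subtypeVal
  have hres := hφ.isOpenEmbedding_domRestrict_s7 hU hinj
  have := Measure.Regular.comap' ν hval
  have := Measure.Regular.comap' μ hres
  refine Measure.ext_of_integral_eq_on_compactlySupported fun g ↦ ?_
  have hgC : HasCompactSupport fun u ↦ (g u : ℂ) :=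
    g.hasCompactSupport.comp_left Complex.ofReal_zero
  have hgC_cont : Continuous fun u ↦ (g u : ℂ) := by fun_prop
  have key := hint _ (hgC.continuous_extend_zero hU hgC_cont)
    (hgC.extend_zero continuous_subtype_val)
  simp_rw [tsum_fiber_extend_subtype_val hinj] at key
  rw [← hval.measurableEmbedding.integral_comap_eq_integral_extend,
    ← hres.measurableEmbedding.integral_comap_eq_integral_extend, integral_complex_ofReal,
    integral_complex_ofReal] at key
  exact_mod_cast key

theorem measure_eq_measure_image_of_comap_eq {X Y : Type*} [MeasurableSpace X]
    [MeasurableSpace Y] {φ : X → Y} {μ : Measure Y} {ν : Measure X} {U : Set X}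
    (hU : MeasurableSet U) (hφU : MeasurableEmbedding (U.domRestrict φ))
    (h : ν.comap ((↑) : U → X) = μ.comap (U.domRestrict φ)) {B : Set X} (hBU : B ⊆ U) :
    ν B = μ (φ '' B) :=
  calc ν B = ν.comap ((↑) : U → X) (((↑) : U → X) ⁻¹' B) := by
        rw [(MeasurableEmbedding.subtype_coe hU).comap_apply, image_preimage_eq_of_subset]
        rwa [Subtype.range_coe]
    _ = μ (φ '' B) := by
        rw [h, hφU.comap_apply, image_domRestrict, inter_eq_left.2 hBU]

theorem stmt7_general {X Y : Type*} [TopologicalSpace X] [TopologicalSpace Y]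
    [T2Space X] [LocallyCompactSpace X]
    [MeasurableSpace X] [BorelSpace X] [MeasurableSpace Y] [BorelSpace Y]
    (φ : X → Y) (hφ : IsLocalHomeomorph φ)
    (μ : Measure Y) (hμ : μ.Regular) (ν : Measure X) (hν : ν.Regular)
    (hint : ∀ f : X → ℂ, Continuous f → HasCompactSupport f →
      ∫ x, f x ∂ν = ∫ y, ∑' x : (φ ⁻¹' {y}), f (x : X) ∂μ) :
    IsPullback φ ν μ := fun _U hU hinj _B hBU _ ↦
  measure_eq_measure_image_of_comap_eq hU.measurableSet
    (hφ.isOpenEmbedding_domRestrict_s7 hU hinj).measurableEmbedding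
    (comap_subtype_val_eq_comap_domRestrict hφ μ ν hint hU hinj) hBU

/-- The Riesz-representation pullback coincides with the sheaf-theoretic pullback: if
`∫ f dν = ∫ Σ_{x ∈ φ⁻¹(y)} f(x) dμ(y)` for all `f ∈ C_c(X)`, then `ν B = μ (φ '' B)` for
every Borel `B` contained in an open set on which `φ` is injective. -/
theorem stmt7 {X Y : Type*} [TopologicalSpace X] [TopologicalSpace Y]
    [SecondCountableTopology X] [SecondCountableTopology Y]
    [T2Space X] [T2Space Y] [LocallyCompactSpace X] [LocallyCompactSpace Y]
    [MeasurableSpace X] [BorelSpace X] [MeasurableSpace Y] [BorelSpace Y]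
    (φ : X → Y) (hφ : IsLocalHomeomorph φ)
    (μ : Measure Y) (hμ : μ.Regular) (ν : Measure X) (hν : ν.Regular)
    (hint : ∀ f : X → ℂ, Continuous f → HasCompactSupport f →
      ∫ x, f x ∂ν = ∫ y, ∑' x : (φ ⁻¹' {y}), f (x : X) ∂μ) :
    IsPullback φ ν μ :=
  stmt7_general φ hφ μ hμ ν hν hint
end

section
/- Let E be a topological graph and K ⊆ E* a compact subset of the finite path space. Then the cylinder set Z(K) = { a ∈ ∂E : a(n) ∈ K for some 0 ≤ n ≤ |a| } is compact in the boundary path space ∂E. -/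
open MeasureTheory Set

namespace TopGraph

universe u
variable {V E : Type u} (r s : E → V)

/-- Composability of a tuple of edges: the source of each edge is the range of the next. -/
def Comp (n : ℕ) (a : Fin n → E) : Prop :=
  ∀ i j : Fin n, (j : ℕ) = (i : ℕ) + 1 → s (a i) = r (a j)

/-- The space `E^n` of paths of length `n`; `E^0` is the vertex space `V`. -/
def PathN : ℕ → Type u
  | 0 => V
  | n + 1 => {a : Fin (n + 1) → E // Comp r s (n + 1) a}

/-- The space `E^∞` of infinite paths. -/
def PathInf : Type u := {a : ℕ → E // ∀ i : ℕ, s (a i) = r (a (i + 1))}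

/-- The edges of a finite path. -/
def edgeOf : ∀ {n : ℕ}, PathN r s n → Fin n → E
  | 0, _, i => absurd i.isLt (by omega)
  | _ + 1, q, i => q.1 i

/-- The source of a finite path (for a vertex, the vertex itself). -/
def srcFin : ∀ {n : ℕ}, PathN r s n → V
  | 0, v => v
  | n + 1, q => s (q.1 ⟨n, Nat.lt_succ_self n⟩)

/-- The range of a finite path (for a vertex, the vertex itself). -/
def rngFin : ∀ {n : ℕ}, PathN r s n → V
  | 0, v => v
  | n + 1, q => r (q.1 ⟨0, Nat.succ_pos n⟩)

/-- Truncation `a ↦ a(n)` of a finite path, with `a(0) = r(a)`. -/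
def truncFin : ∀ {m n : ℕ}, n ≤ m → PathN r s m → PathN r s n
  | 0, 0, _, q => q
  | _ + 1, 0, _, q => r (q.1 ⟨0, Nat.succ_pos _⟩)
  | 0, _ + 1, h, _ => absurd h (by omega)
  | _ + 1, _ + 1, h, q =>
    ⟨fun i => q.1 (Fin.castLE h i), fun i j hij =>
      q.2 (Fin.castLE h i) (Fin.castLE h j) (by simpa using hij)⟩

/-- Truncation `a ↦ a(n)` of an infinite path. -/
def truncInf (a : PathInf r s) : ∀ n : ℕ, PathN r s n
  | 0 => r (a.1 0)
  | n + 1 => ⟨fun i => a.1 i, fun i j hij => by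
      show s (a.1 (i : ℕ)) = r (a.1 (j : ℕ))
      rw [hij]
      exact a.2 (i : ℕ)⟩

/-- The finite path space `E* = ⊔ₙ E^n`. -/
def FinPath : Type u := Σ n : ℕ, PathN r s n

/-- Truncation of a finite path, as a map of `E*`. -/
def ftrunc (p : FinPath r s) (k : ℕ) (h : k ≤ p.1) : FinPath r s :=
  ⟨k, truncFin r s h p.2⟩

section Topology

variable [TopologicalSpace V] [TopologicalSpace E]

instance instTopPathN : ∀ n : ℕ, TopologicalSpace (PathN r s n)
  | 0 => (inferInstance : TopologicalSpace V)
  | n + 1 => (inferInstance : TopologicalSpace {a : Fin (n + 1) → E // Comp r s (n + 1) a})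

noncomputable instance instMeasPathN (n : ℕ) : MeasurableSpace (PathN r s n) := borel _

instance instTopPathInf : TopologicalSpace (PathInf r s) :=
  (inferInstance : TopologicalSpace {a : ℕ → E // ∀ i : ℕ, s (a i) = r (a (i + 1))})

instance instTopFinPath : TopologicalSpace (FinPath r s) :=
  (inferInstance : TopologicalSpace (Σ n : ℕ, PathN r s n))

/-- A vertex is regular if it has a relatively compact open neighborhood `U` with
`r⁻¹(cl U)` compact and `r(r⁻¹(U)) = U`. -/
def RegularVertex (v : V) : Prop :=
  ∃ U : Set V, IsOpen U ∧ v ∈ U ∧ IsCompact (closure U) ∧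
    IsCompact (r ⁻¹' closure U) ∧ r '' (r ⁻¹' U) = U

/-- The carrier of the boundary path space: finite or infinite paths. -/
def BPathCarrier : Type u := FinPath r s ⊕ PathInf r s

/-- Length of a (possibly infinite) path, in `ℕ∞`. -/
def blen : BPathCarrier r s → ℕ∞
  | .inl p => (p.1 : ℕ∞)
  | .inr _ => ⊤

/-- Truncation `a ↦ a(n)` of a boundary path, `n ≤ |a|`, valued in `E*`. -/
def btrunc : ∀ (x : BPathCarrier r s) (n : ℕ), (n : ℕ∞) ≤ blen r s x → FinPath r s
  | .inl p, n, h => ftrunc r s p n (by simpa [blen] using h)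
  | .inr a, n, _ => ⟨n, truncInf r s a n⟩

/-- The boundary path space `∂E`: singular finite paths together with infinite paths. -/
def BPath : Type u :=
  {x : BPathCarrier r s //
    ∀ p : FinPath r s, x = Sum.inl p → ¬ RegularVertex r (srcFin r s p.2)}

/-- The cylinder sets `Z(S) = {a ∈ ∂E : a(n) ∈ S for some n ≤ |a|}`. -/
def ZSet (S : Set (FinPath r s)) : Set (BPath r s) :=
  {x | ∃ (n : ℕ) (h : (n : ℕ∞) ≤ blen r s x.val), btrunc r s x.val n h ∈ S}

/-- The topology on `∂E` generated by the base `{Z(U) \ Z(K) : U open, K compact}`. -/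
instance instTopBPath : TopologicalSpace (BPath r s) :=
  TopologicalSpace.generateFrom
    {A | ∃ (U K : Set (FinPath r s)), IsOpen U ∧ IsCompact K ∧
      A = ZSet r s U \ ZSet r s K}

noncomputable instance instMeasBPath : MeasurableSpace (BPath r s) := borel _

end Topology

/-- The backwards shift on finite paths (acting as the identity on vertices). -/
def shiftF : FinPath r s → FinPath r s
  | ⟨0, v⟩ => ⟨0, v⟩
  | ⟨1, q⟩ => ⟨0, (s (q.1 ⟨0, Nat.one_pos⟩) : PathN r s 0)⟩
  | ⟨n + 2, q⟩ =>
    ⟨n + 1, ⟨fun i => q.1 i.succ, fun i j hij =>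
      q.2 i.succ j.succ (by simp [Fin.val_succ, hij])⟩⟩

/-- The backwards shift on the boundary path carrier. -/
def shiftC : BPathCarrier r s → BPathCarrier r s
  | .inl p => .inl (shiftF r s p)
  | .inr a => .inr ⟨fun i => a.1 (i + 1), fun i => a.2 (i + 1)⟩

section Vertex

variable [TopologicalSpace V] [TopologicalSpace E]

/-- The set of vertices `E⁰ ⊆ ∂E`. -/
def VtxSet : Set (BPath r s) := {x | ∃ v : V, x.val = Sum.inl ⟨0, (v : PathN r s 0)⟩}

/-- The range map `r : ∂E → E⁰`. -/
def brng (x : BPath r s) : V :=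
  match x.val with
  | .inl p => rngFin r s p.2
  | .inr a => r (a.1 0)

end Vertex

section Measures

variable [TopologicalSpace V] [TopologicalSpace E]
variable [MeasurableSpace V] [MeasurableSpace E]

/-- `ν` is the (sheaf-theoretic) pullback of `μ` along `f`. -/
def IsPullback {X Y : Type*} [TopologicalSpace X] [TopologicalSpace Y]
    [MeasurableSpace X] [MeasurableSpace Y] (f : X → Y)
    (ν : Measure X) (μ : Measure Y) : Prop :=
  ∀ U : Set X, IsOpen U → Set.InjOn f U →
    ∀ B : Set X, B ⊆ U → MeasurableSet B → ν B = μ (f '' B)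

/-- A measure `ν` on `∂E` is `β`-quasi-invariant: `σ*ν = e^β ν` on `∂E \ E⁰`, i.e.
`ν(B) = e^{-β} ν(σ(B))` for Borel `B` inside an open set `U ⊆ ∂E \ E⁰` on which `σ`
is injective. -/
def QuasiInv (β : ℝ) (ν : Measure (BPath r s)) : Prop :=
  ∀ U : Set (BPath r s), IsOpen U → Disjoint U (VtxSet r s) →
    Set.InjOn (fun x : BPath r s => shiftC r s x.val) U →
    ∀ B : Set (BPath r s), B ⊆ U → MeasurableSet B →
      ν B = ENNReal.ofReal (Real.exp (-β)) *
        ν (Subtype.val ⁻¹' (shiftC r s '' (Subtype.val '' B)))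

/-- A regular Borel measure `μ` on `E⁰` is `β`-sub-invariant: `Tμ ≤ e^β μ` with equality on
the regular vertices, where `T = r_* s*`. -/
def SubInv (β : ℝ) (μ : Measure V) : Prop :=
  μ.Regular ∧ ∃ sμ : Measure E, sμ.Regular ∧ IsPullback s sμ μ ∧
    Measure.map r sμ ≤ ENNReal.ofReal (Real.exp β) • μ ∧
    ∀ B : Set V, MeasurableSet B → (∀ v ∈ B, RegularVertex r v) →
      Measure.map r sμ B = ENNReal.ofReal (Real.exp β) * μ B

end Measures

section BPathN

variable [TopologicalSpace V] [TopologicalSpace E]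

/-- The `n`-th boundary path space `∂Eₙ = E⁰_sng ⊔ ⋯ ⊔ E^{n-1}_sng ⊔ E^n`. -/
def BPathN (n : ℕ) : Type u :=
  {p : FinPath r s // p.1 ≤ n ∧ (p.1 < n → ¬ RegularVertex r (srcFin r s p.2))}

/-- Cylinder sets in `∂Eₙ`. -/
def ZNSet (n : ℕ) (S : Set (FinPath r s)) : Set (BPathN r s n) :=
  {x | ∃ (k : ℕ) (h : k ≤ x.val.1), ftrunc r s x.val k h ∈ S}

instance instTopBPathN (n : ℕ) : TopologicalSpace (BPathN r s n) :=
  TopologicalSpace.generateFrom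
    {A | ∃ (U K : Set (FinPath r s)), IsOpen U ∧ IsCompact K ∧
      A = ZNSet r s n U \ ZNSet r s n K}

noncomputable instance instMeasBPathN (n : ℕ) : MeasurableSpace (BPathN r s n) := borel _

/-- The map `ρₙ : ∂Eₙ₊₁ → ∂Eₙ`, truncating paths of length `n+1` and fixing shorter paths. -/
def rho (n : ℕ) (x : BPathN r s (n + 1)) : BPathN r s n :=
  if h : x.val.1 = n + 1 then
    ⟨ftrunc r s x.val n (by omega), ⟨le_refl n, fun hlt => absurd hlt (lt_irrefl n)⟩⟩
  else
    ⟨x.val, ⟨by have := x.property.1; omega, fun hlt => x.property.2 (by omega)⟩⟩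

end BPathN

/-- The periodicity group of a boundary path. -/
def Per (x : BPathCarrier r s) : Set ℤ :=
  {z | ∃ k l : ℕ, (k : ℕ∞) ≤ blen r s x ∧ (l : ℕ∞) ≤ blen r s x ∧
    z = (k : ℤ) - (l : ℤ) ∧ (shiftC r s)^[k] x = (shiftC r s)^[l] x}

section Gpd

variable [TopologicalSpace V] [TopologicalSpace E]

/-- The graph groupoid `𝒢_E`, as a set of triples. -/
def GraphGpd : Set (BPath r s × ℤ × BPath r s) :=
  {t | ∃ k l : ℕ, (k : ℕ∞) ≤ blen r s t.1.val ∧ (l : ℕ∞) ≤ blen r s t.2.2.val ∧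
    t.2.1 = (k : ℤ) - (l : ℤ) ∧ (shiftC r s)^[k] t.1.val = (shiftC r s)^[l] t.2.2.val}

end Gpd

/-- The infinite path `c^∞` obtained by repeating a cycle `c`. -/
def cycInf {m : ℕ} (c : PathN r s (m + 1)) (hc : rngFin r s c = srcFin r s c) :
    PathInf r s :=
  ⟨fun i => c.1 ⟨i % (m + 1), Nat.mod_lt i (Nat.succ_pos m)⟩, by
    intro i
    have hlt : i % (m + 1) < m + 1 := Nat.mod_lt i (Nat.succ_pos m)
    show s (c.1 ⟨i % (m + 1), Nat.mod_lt i (Nat.succ_pos m)⟩) =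
      r (c.1 ⟨(i + 1) % (m + 1), Nat.mod_lt (i + 1) (Nat.succ_pos m)⟩)
    by_cases h1 : i % (m + 1) < m
    · have key : (i + 1) % (m + 1) = i % (m + 1) + 1 := by
        conv_lhs => rw [← Nat.div_add_mod i (m + 1)]
        rw [Nat.add_assoc, Nat.mul_add_mod, Nat.mod_eq_of_lt (by omega)]
      exact c.2 _ _ key
    · have h2 : i % (m + 1) = m := by omega
      have key : (i + 1) % (m + 1) = 0 := by
        conv_lhs => rw [← Nat.div_add_mod i (m + 1)]
        rw [Nat.add_assoc, Nat.mul_add_mod, h2, Nat.mod_self]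
      have e1 : (⟨i % (m + 1), Nat.mod_lt i (Nat.succ_pos m)⟩ : Fin (m + 1)) =
          ⟨m, Nat.lt_succ_self m⟩ := Fin.ext h2
      have e2 : (⟨(i + 1) % (m + 1), Nat.mod_lt (i + 1) (Nat.succ_pos m)⟩ : Fin (m + 1)) =
          ⟨0, Nat.succ_pos m⟩ := Fin.ext key
      rw [e1, e2]
      exact hc.symm⟩

/-- Prepending a finite path `b` to an infinite path `d` with `s(b) = r(d)`. -/
def prepend : ∀ {n : ℕ} (b : PathN r s n) (d : PathInf r s),
    srcFin r s b = r (d.1 0) → PathInf r s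
  | 0, _, d, _ => d
  | n + 1, b, d, h =>
    ⟨fun i => if h' : i < n + 1 then b.1 ⟨i, h'⟩ else d.1 (i - (n + 1)), by
      intro i
      show s (if h' : i < n + 1 then b.1 ⟨i, h'⟩ else d.1 (i - (n + 1))) =
        r (if h' : i + 1 < n + 1 then b.1 ⟨i + 1, h'⟩ else d.1 (i + 1 - (n + 1)))
      by_cases h1 : i + 1 < n + 1
      · rw [dif_pos (by omega : i < n + 1), dif_pos h1]
        exact b.2 ⟨i, by omega⟩ ⟨i + 1, h1⟩ rfl
      · by_cases h2 : i < n + 1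
        · rw [dif_pos h2, dif_neg h1]
          have hi : i = n := by omega
          have h0 : i + 1 - (n + 1) = 0 := by omega
          have e : (⟨i, h2⟩ : Fin (n + 1)) = ⟨n, Nat.lt_succ_self n⟩ := Fin.ext hi
          rw [h0, e]
          exact h
        · rw [dif_neg h2, dif_neg h1]
          have h3 : i + 1 - (n + 1) = (i - (n + 1)) + 1 := by omega
          rw [h3]
          exact d.2 (i - (n + 1))⟩

/-- `b` ends with `c`: `b = a·c` for some finite path `a`. -/
def EndsWith {n m : ℕ} (b : PathN r s n) (c : PathN r s m) : Prop :=
  ∃ h : m ≤ n, ∀ i : Fin m,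
    edgeOf r s b ⟨n - m + (i : ℕ), by have := i.isLt; omega⟩ = edgeOf r s c i

/-- `x` is eventually cyclic with cycle of length `m + 1`: `x = b c^∞` for a cycle `c` of
length `m+1` and an exit `b` of `c`. -/
def EvCyclicWitness (x : BPathCarrier r s) (m : ℕ) : Prop :=
  ∃ (c : PathN r s (m + 1)) (hc : rngFin r s c = srcFin r s c)
    (k : ℕ) (b : PathN r s k)
    (hlink : srcFin r s b = r ((cycInf r s c hc).1 0)),
    srcFin r s b = rngFin r s c ∧ ¬ EndsWith r s b c ∧
    x = Sum.inr (prepend r s b (cycInf r s c hc) hlink)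

/-!
An ultrafilter `𝒰` containing `Z(K)` contains the cylinder of a compact subset of some level `E^n`
(it charges `E^n`), hence charges every lower level. On each charged level the truncations
converge along `𝒰` to a point `p_m`, and these limits are coherent under truncation. If every
level is charged, the `p_m` assemble to an infinite path; otherwise the last charged level `m`
yields the finite path `p_m`, whose source is singular because regularity there would charge level
`m + 1` as well. In both cases this path is a limit of `𝒰`: a basic set `Z(U) \ Z(C)` containing
it lies in `𝒰`, since the compact `C` only meets finitely many levels, each of them charged only
if the path reaches it.
-/

open Filter Topology

section Truncation

lemma truncFin_self : ∀ {n : ℕ} (h : n ≤ n) (q : PathN r s n), truncFin r s h q = q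
  | 0, _, _ => rfl
  | _ + 1, _, q => Subtype.ext (funext fun _ => congrArg q.1 (Fin.ext rfl))

lemma truncFin_truncFin : ∀ {k m n : ℕ} (hkm : k ≤ m) (hmn : m ≤ n) (q : PathN r s n),
    truncFin r s hkm (truncFin r s hmn q) = truncFin r s (hkm.trans hmn) q
  | 0, 0, 0, _, _, _ => rfl
  | 0, 0, _ + 1, _, _, _ => rfl
  | 0, _ + 1, _ + 1, _, _, _ => rfl
  | _ + 1, _ + 1, _ + 1, _, _, q => Subtype.ext (funext fun _ => congrArg q.1 (Fin.ext rfl))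
  | _ + 1, 0, _, hkm, _, _ => absurd hkm (by omega)
  | 0, _ + 1, 0, _, hmn, _ => absurd hmn (by omega)
  | _ + 1, _ + 1, 0, _, hmn, _ => absurd hmn (by omega)

lemma truncFin_truncInf : ∀ (a : PathInf r s) {k m : ℕ} (hkm : k ≤ m),
    truncFin r s hkm (truncInf r s a m) = truncInf r s a k
  | _, 0, 0, _ => rfl
  | _, 0, _ + 1, _ => rfl
  | _, _ + 1, _ + 1, _ => rfl
  | _, _ + 1, 0, h => absurd h (by omega)

lemma edgeOf_truncFin_succ : ∀ {m : ℕ} (q : PathN r s (m + 1)) (i : Fin m),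
    edgeOf r s (truncFin r s (Nat.le_succ m) q) i = q.1 i.castSucc
  | 0, _, i => i.elim0
  | _ + 1, _, _ => rfl

lemma srcFin_truncFin_succ : ∀ {m : ℕ} (q : PathN r s (m + 1)),
    srcFin r s (truncFin r s (Nat.le_succ m) q) = r (q.1 (Fin.last m))
  | 0, _ => rfl
  | _ + 1, q => q.2 _ _ rfl

lemma exists_truncInf_eq (P : ∀ m, PathN r s m)
    (hP : ∀ {k m : ℕ} (hkm : k ≤ m), truncFin r s hkm (P m) = P k) :
    ∃ a : PathInf r s, ∀ m, truncInf r s a m = P m := by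
  have hedge : ∀ {i m : ℕ} (hi : i < m + 1),
      (P (i + 1)).1 ⟨i, i.lt_succ_self⟩ = (P (m + 1)).1 ⟨i, hi⟩ := by
    intro i m hi
    rw [← hP (show i + 1 ≤ m + 1 by omega)]
    rfl
  refine ⟨⟨fun i => (P (i + 1)).1 ⟨i, i.lt_succ_self⟩, fun i => ?_⟩, fun m => ?_⟩
  · show s ((P (i + 1)).1 _) = r ((P (i + 2)).1 _)
    rw [hedge (m := i + 1) (by omega)]
    exact (P (i + 2)).2 ⟨i, by omega⟩ ⟨i + 1, by omega⟩ rfl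
  · cases m with
    | zero => rw [← hP (Nat.zero_le 1)]; rfl
    | succ m => exact Subtype.ext (funext fun i => hedge i.isLt)

/-- The truncation `x(n) ∈ E^n` of a boundary path; `btrunc` is its image in `E*`. -/
def btruncN : ∀ (x : BPathCarrier r s) (n : ℕ), (n : ℕ∞) ≤ blen r s x → PathN r s n
  | .inl p, _, h => truncFin r s (by simpa [blen] using h) p.2
  | .inr a, n, _ => truncInf r s a n

lemma btrunc_eq (x : BPathCarrier r s) (n : ℕ) (h : (n : ℕ∞) ≤ blen r s x) :
    btrunc r s x n h = ⟨n, btruncN r s x n h⟩ := by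
  cases x <;> rfl

lemma truncFin_btruncN (x : BPathCarrier r s) {k m : ℕ} (hkm : k ≤ m)
    (hm : (m : ℕ∞) ≤ blen r s x) (hk : (k : ℕ∞) ≤ blen r s x) :
    truncFin r s hkm (btruncN r s x m hm) = btruncN r s x k hk := by
  cases x with
  | inl p => exact truncFin_truncFin r s hkm _ p.2
  | inr a => exact truncFin_truncInf r s a hkm

end Truncation

section Topology

variable [TopologicalSpace V] [TopologicalSpace E]

instance instT2PathN [T2Space V] [T2Space E] : ∀ n, T2Space (PathN r s n)
  | 0 => inferInstanceAs (T2Space V)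
  | n + 1 => inferInstanceAs (T2Space {a : Fin (n + 1) → E // Comp r s (n + 1) a})

lemma continuous_truncFin (hr : Continuous r) :
    ∀ {m n : ℕ} (h : n ≤ m), Continuous (truncFin r s h : PathN r s m → PathN r s n)
  | 0, 0, _ => continuous_id
  | _ + 1, 0, _ => hr.comp ((continuous_apply _).comp continuous_subtype_val)
  | 0, _ + 1, h => absurd h (by omega)
  | m + 1, n + 1, h => by
    have hedges : Continuous fun (q : PathN r s (m + 1)) (i : Fin (n + 1)) =>
        q.1 (Fin.castLE h i) :=
      continuous_pi fun i => (continuous_apply (Fin.castLE h i)).comp continuous_subtype_val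
    exact hedges.subtype_mk _

lemma continuous_edgeOf : ∀ {m : ℕ} (i : Fin m), Continuous fun q : PathN r s m => edgeOf r s q i
  | 0, i => i.elim0
  | _ + 1, i => (continuous_apply i).comp continuous_subtype_val

lemma continuous_srcFin (hs : Continuous s) :
    ∀ {n : ℕ}, Continuous (srcFin r s : PathN r s n → V)
  | 0 => continuous_id
  | _ + 1 => hs.comp ((continuous_apply _).comp continuous_subtype_val)

lemma isClosed_setOf_comp [T2Space V] (hr : Continuous r) (hs : Continuous s) (n : ℕ) :
    IsClosed {a : Fin n → E | Comp r s n a} := by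
  simp only [Comp, ofPred_forall]
  exact isClosed_iInter fun i => isClosed_iInter fun j => isClosed_iInter fun _ =>
    isClosed_eq (hs.comp (continuous_apply i)) (hr.comp (continuous_apply j))

lemma isCompact_setOf_forall_mem [T2Space V] (hr : Continuous r) (hs : Continuous s) {n : ℕ}
    {Ks : Fin (n + 1) → Set E} (hKs : ∀ i, IsCompact (Ks i)) :
    IsCompact {q : PathN r s (n + 1) | ∀ i, q.1 i ∈ Ks i} := by
  have h := (isClosed_setOf_comp r s hr hs (n + 1)).isClosedEmbedding_subtypeVal.isCompact_preimage
    (isCompact_univ_pi hKs)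
  simp only [Set.preimage, Set.mem_univ_pi] at h
  exact h

lemma isCompact_preimage_truncFin_succ [T2Space V] [T2Space E] (hr : Continuous r)
    (hs : Continuous s) {m : ℕ} {D : Set (PathN r s m)} (hD : IsCompact D) {Q : Set V}
    (hQ : IsCompact (r ⁻¹' Q)) (hDQ : D ⊆ srcFin r s ⁻¹' Q) :
    IsCompact (truncFin r s (Nat.le_succ m) ⁻¹' D) := by
  refine (isCompact_setOf_forall_mem r s hr hs
    (Ks := Fin.lastCases (r ⁻¹' Q) fun i => (edgeOf r s · i) '' D) fun i => ?_).of_isClosed_subset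
    (hD.isClosed.preimage (continuous_truncFin r s hr _)) fun q hq i => ?_
  · induction i using Fin.lastCases with
    | last => simpa using hQ
    | cast i => simpa using hD.image (continuous_edgeOf r s i)
  · induction i using Fin.lastCases with
    | last => simpa [← srcFin_truncFin_succ] using hDQ hq
    | cast i => simpa using ⟨_, hq, edgeOf_truncFin_succ r s q i⟩

/-- The cylinder `Z(W)` of a set `W ⊆ E^m`. -/
def levelCyl (m : ℕ) (W : Set (PathN r s m)) : Set (BPath r s) :=
  {x | ∃ h : (m : ℕ∞) ≤ blen r s x.val, btruncN r s x.val m h ∈ W}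

lemma levelCyl_mono {m : ℕ} {W W' : Set (PathN r s m)} (h : W ⊆ W') :
    levelCyl r s m W ⊆ levelCyl r s m W' :=
  fun _ ⟨hx, hW⟩ => ⟨hx, h hW⟩

lemma levelCyl_preimage_truncFin {k m : ℕ} (hkm : k ≤ m) (W : Set (PathN r s k)) :
    levelCyl r s m (truncFin r s hkm ⁻¹' W) = levelCyl r s k W ∩ levelCyl r s m univ := by
  ext x
  constructor
  · rintro ⟨h, hx⟩
    have hk : (k : ℕ∞) ≤ blen r s x.val := (Nat.cast_le.2 hkm).trans h
    exact ⟨⟨hk, by rwa [← truncFin_btruncN r s x.val hkm h hk]⟩, h, trivial⟩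
  · rintro ⟨⟨hk, hx⟩, h, -⟩
    exact ⟨h, by rwa [mem_preimage, truncFin_btruncN r s x.val hkm h hk]⟩

lemma mem_ZSet_iff {S : Set (FinPath r s)} {x : BPath r s} :
    x ∈ ZSet r s S ↔ ∃ m, x ∈ levelCyl r s m (Sigma.mk m ⁻¹' S) := by
  simp only [ZSet, levelCyl, btrunc_eq, mem_ofPred_eq]
  rfl

/-- A compact subset of `E*` meets only finitely many levels. -/
lemma exists_levelCyl_mem_of_ZSet_mem {𝒰 : Ultrafilter (BPath r s)} {K : Set (FinPath r s)}
    (hK : IsCompact K) (hK𝒰 : ZSet r s K ∈ 𝒰) :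
    ∃ m, levelCyl r s m (Sigma.mk m ⁻¹' K) ∈ 𝒰 := by
  have hlevels : (Sigma.fst '' K).Finite :=
    (hK.image (continuous_sigma fun _ => continuous_const)).finite_of_discrete
  have hcover : ZSet r s K ⊆ ⋃ m ∈ Sigma.fst '' K, levelCyl r s m (Sigma.mk m ⁻¹' K) := by
    intro x hx
    obtain ⟨m, hm⟩ := (mem_ZSet_iff r s).1 hx
    exact mem_biUnion ⟨_, hm.2, rfl⟩ hm
  obtain ⟨m, -, hm⟩ := (Ultrafilter.finite_biUnion_mem_iff hlevels).1 (mem_of_superset hK𝒰 hcover)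
  exact ⟨m, hm⟩

lemma not_regularVertex_srcFin_btruncN (y : BPath r s) {m : ℕ} (h : (m : ℕ∞) ≤ blen r s y.val)
    (hm : ¬ ((m + 1 : ℕ) : ℕ∞) ≤ blen r s y.val) :
    ¬ RegularVertex r (srcFin r s (btruncN r s y.val m h)) := by
  obtain ⟨y | a, hy⟩ := y
  · obtain ⟨n, q⟩ := y
    obtain rfl : m = n := by
      simp only [blen, Nat.cast_le] at h hm
      omega
    show ¬ RegularVertex r (srcFin r s (truncFin r s _ q))
    rw [truncFin_self]
    exact hy _ rfl
  · exact absurd le_top hm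

end Topology

section Ultrafilter

variable {r s} [TopologicalSpace V] [TopologicalSpace E] (𝒰 : Ultrafilter (BPath r s))

def ChargesLevel (m : ℕ) : Prop :=
  ∃ D : Set (PathN r s m), IsCompact D ∧ levelCyl r s m D ∈ 𝒰

def IsLevelLimit (m : ℕ) (p : PathN r s m) : Prop :=
  ∀ W : Set (PathN r s m), IsOpen W → p ∈ W → levelCyl r s m W ∈ 𝒰

def IsLimitPath (x : BPath r s) : Prop :=
  (∀ m h, IsLevelLimit 𝒰 m (btruncN r s x.val m h)) ∧
    ∀ m, ChargesLevel 𝒰 m → (m : ℕ∞) ≤ blen r s x.val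

variable {𝒰}

lemma ChargesLevel.mono (hr : Continuous r) {k m : ℕ} (hkm : k ≤ m)
    (hm : ChargesLevel 𝒰 m) : ChargesLevel 𝒰 k := by
  obtain ⟨D, hD, hD𝒰⟩ := hm
  refine ⟨truncFin r s hkm '' D, hD.image (continuous_truncFin r s hr hkm),
    mem_of_superset hD𝒰 ?_⟩
  calc levelCyl r s m D ⊆ levelCyl r s m (truncFin r s hkm ⁻¹' (truncFin r s hkm '' D)) :=
        levelCyl_mono r s (subset_preimage_image _ _)
    _ ⊆ _ := (levelCyl_preimage_truncFin r s hkm _).trans_subset inter_subset_left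

lemma IsLevelLimit.truncFin (hr : Continuous r) {k m : ℕ} {p : PathN r s m}
    (hp : IsLevelLimit 𝒰 m p) (hkm : k ≤ m) : IsLevelLimit 𝒰 k (truncFin r s hkm p) :=
  fun W hW hpW => mem_of_superset (hp _ (hW.preimage (continuous_truncFin r s hr hkm)) hpW)
    ((levelCyl_preimage_truncFin r s hkm W).trans_subset inter_subset_left)

lemma IsLevelLimit.mem_of_isClosed {m : ℕ} {p : PathN r s m} (hp : IsLevelLimit 𝒰 m p)
    {C : Set (PathN r s m)} (hC : IsClosed C) (hC𝒰 : levelCyl r s m C ∈ 𝒰) : p ∈ C := by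
  by_contra hpC
  obtain ⟨x, ⟨_, hxC⟩, _, hx⟩ :=
    Ultrafilter.nonempty_of_mem (inter_mem (hp _ hC.isOpen_compl hpC) hC𝒰)
  exact hxC hx

lemma IsLevelLimit.eq [T2Space V] [T2Space E] {m : ℕ} {p q : PathN r s m}
    (hp : IsLevelLimit 𝒰 m p) (hq : IsLevelLimit 𝒰 m q) : p = q := by
  by_contra hne
  obtain ⟨Wp, Wq, hWp, hWq, hpW, hqW, hdisj⟩ := t2_separation hne
  obtain ⟨x, ⟨_, hxp⟩, _, hxq⟩ :=
    Ultrafilter.nonempty_of_mem (inter_mem (hp Wp hWp hpW) (hq Wq hWq hqW))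
  exact disjoint_left.1 hdisj hxp hxq

lemma ChargesLevel.exists_isLevelLimit {m : ℕ} (hm : ChargesLevel 𝒰 m) :
    ∃ p, IsLevelLimit 𝒰 m p := by
  classical
  obtain ⟨D, hD, hD𝒰⟩ := hm
  obtain ⟨x₀, h₀, -⟩ := Ultrafilter.nonempty_of_mem hD𝒰
  -- a total extension of the truncation `x ↦ x(m)`, to push `𝒰` forward to `E^m`
  let F : BPath r s → PathN r s m := fun x =>
    if h : (m : ℕ∞) ≤ blen r s x.val then btruncN r s x.val m h else btruncN r s x₀.val m h₀
  have hF : ∀ W, F ⁻¹' W ∩ levelCyl r s m univ ⊆ levelCyl r s m W := by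
    rintro W x ⟨hxW, h, -⟩
    exact ⟨h, by simpa [F, h] using hxW⟩
  have hFD : F ⁻¹' D ∈ 𝒰 := mem_of_superset hD𝒰 fun x ⟨h, hx⟩ => by simpa [F, h] using hx
  obtain ⟨p, -, hp⟩ := hD.ultrafilter_le_nhds (𝒰.map F) (le_principal_iff.2 hFD)
  exact ⟨p, fun W hW hpW => mem_of_superset
    (inter_mem (hp (hW.mem_nhds hpW)) (mem_of_superset hD𝒰 (levelCyl_mono r s (subset_univ D))))
    (hF W)⟩

variable {x : BPath r s}

lemma IsLimitPath.mem_levelCyl [T2Space V] [T2Space E] (hx : IsLimitPath 𝒰 x) {m : ℕ}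
    {D : Set (PathN r s m)} (hD : IsCompact D) (hD𝒰 : levelCyl r s m D ∈ 𝒰) :
    x ∈ levelCyl r s m D :=
  have h := hx.2 m ⟨D, hD, hD𝒰⟩
  ⟨h, (hx.1 m h).mem_of_isClosed hD.isClosed hD𝒰⟩

lemma IsLimitPath.mem_ZSet [T2Space V] [T2Space E] (hx : IsLimitPath 𝒰 x)
    {K : Set (FinPath r s)} (hK : IsCompact K) (hK𝒰 : ZSet r s K ∈ 𝒰) : x ∈ ZSet r s K := by
  obtain ⟨m, hm⟩ := exists_levelCyl_mem_of_ZSet_mem r s hK hK𝒰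
  exact (mem_ZSet_iff r s).2
    ⟨m, hx.mem_levelCyl (IsClosedEmbedding.sigmaMk.isCompact_preimage hK) hm⟩

lemma IsLimitPath.le_nhds [T2Space V] [T2Space E] (hx : IsLimitPath 𝒰 x) : ↑𝒰 ≤ 𝓝 x := by
  rw [TopologicalSpace.nhds_generateFrom]
  refine le_iInf₂ fun A ⟨hxA, U, C, hU, hC, hA⟩ => le_principal_iff.2 ?_
  subst hA
  rw [sdiff_eq]
  refine inter_mem ?_ (Ultrafilter.compl_mem_iff_notMem.2 fun hC𝒰 => hxA.2 (hx.mem_ZSet hC hC𝒰))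
  obtain ⟨m, h, hxU⟩ := (mem_ZSet_iff r s).1 hxA.1
  exact mem_of_superset (hx.1 m h _ (hU.preimage continuous_sigmaMk) hxU)
    fun y hy => (mem_ZSet_iff r s).2 ⟨m, hy⟩

/-- If `𝒰` lives on paths of length `> m`, regularity of `s(p)` confines their `(m+1)`-st edge to
the compact set `r⁻¹(cl U)`, so level `m + 1` would be charged; otherwise `𝒰` contains finite
paths of length exactly `m` with source in `U`, and these are not in `∂E`. -/
lemma IsLevelLimit.not_regularVertex_srcFin [T2Space V] [T2Space E] (hr : Continuous r)
    (hs : Continuous s) {m : ℕ} {p : PathN r s m} (hp : IsLevelLimit 𝒰 m p)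
    (hm : ChargesLevel 𝒰 m) (hm1 : ¬ ChargesLevel 𝒰 (m + 1)) :
    ¬ RegularVertex r (srcFin r s p) := by
  rintro ⟨U, hU, hpU, hUc, hrU, hrUU⟩
  have hsrc : levelCyl r s m (srcFin r s ⁻¹' U) ∈ 𝒰 :=
    hp _ (hU.preimage (continuous_srcFin r s hs)) hpU
  by_cases hlong : levelCyl r s (m + 1) univ ∈ 𝒰
  · obtain ⟨D, hD, hD𝒰⟩ := hm
    refine hm1 ⟨_, isCompact_preimage_truncFin_succ r s hr hs
      (hD.inter_right (isClosed_closure.preimage (continuous_srcFin r s hs))) hrU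
      inter_subset_right, ?_⟩
    rw [levelCyl_preimage_truncFin]
    refine inter_mem (mem_of_superset (inter_mem hD𝒰 hsrc) ?_) hlong
    rintro x ⟨⟨h, hxD⟩, _, hxU⟩
    exact ⟨h, hxD, subset_closure hxU⟩
  · obtain ⟨y, ⟨h, hyU⟩, hy⟩ := Ultrafilter.nonempty_of_mem
      (inter_mem hsrc (Ultrafilter.compl_mem_iff_notMem.2 hlong))
    exact not_regularVertex_srcFin_btruncN r s y h (fun h1 => hy ⟨h1, trivial⟩)
      ⟨U, hU, hyU, hUc, hrU, hrUU⟩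

lemma exists_isLimitPath_of_forall_chargesLevel [T2Space V] [T2Space E] (hr : Continuous r)
    (h : ∀ m, ChargesLevel 𝒰 m) : ∃ x, IsLimitPath 𝒰 x := by
  choose P hP using fun m => (h m).exists_isLevelLimit
  obtain ⟨a, ha⟩ := exists_truncInf_eq r s P fun hkm => ((hP _).truncFin hr hkm).eq (hP _)
  refine ⟨⟨.inr a, fun _ h => by cases h⟩, fun m _ => ?_, fun _ _ => le_top⟩
  show IsLevelLimit 𝒰 m (truncInf r s a m)
  rw [ha]
  exact hP m

lemma exists_isLimitPath_of_not_chargesLevel_succ [T2Space V] [T2Space E] (hr : Continuous r)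
    (hs : Continuous s) {m : ℕ} (hm : ChargesLevel 𝒰 m) (hm1 : ¬ ChargesLevel 𝒰 (m + 1)) :
    ∃ x, IsLimitPath 𝒰 x := by
  obtain ⟨p, hp⟩ := hm.exists_isLevelLimit
  have hsing := hp.not_regularVertex_srcFin hr hs hm hm1
  refine ⟨⟨.inl ⟨m, p⟩, fun q hq => by obtain rfl := Sum.inl_injective hq; exact hsing⟩,
    fun k hk => hp.truncFin hr (by simpa [blen] using hk), fun k hk => ?_⟩
  show (k : ℕ∞) ≤ m
  by_contra! hlt
  exact hm1 (hk.mono hr (by exact_mod_cast hlt))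

lemma exists_isLimitPath [T2Space V] [T2Space E] (hr : Continuous r) (hs : Continuous s)
    (h0 : ChargesLevel 𝒰 0) : ∃ x, IsLimitPath 𝒰 x := by
  by_cases hall : ∀ m, ChargesLevel 𝒰 m
  · exact exists_isLimitPath_of_forall_chargesLevel hr hall
  · obtain ⟨m, hm, hm1⟩ : ∃ m, ChargesLevel 𝒰 m ∧ ¬ ChargesLevel 𝒰 (m + 1) := by
      by_contra! hstep
      exact hall fun m => Nat.rec h0 hstep m
    exact exists_isLimitPath_of_not_chargesLevel_succ hr hs hm hm1

end Ultrafilter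

theorem stmt9_general {V E : Type u} (r s : E → V) [TopologicalSpace V] [TopologicalSpace E]
    [T2Space V] [T2Space E]
    (hr : Continuous r) (hs : IsLocalHomeomorph s)
    (K : Set (FinPath r s)) (hK : IsCompact K) :
    IsCompact (ZSet r s K) := by
  rw [isCompact_iff_ultrafilter_le_nhds]
  intro 𝒰 hK𝒰
  have hZ : ZSet r s K ∈ 𝒰 := le_principal_iff.1 hK𝒰
  obtain ⟨n, hn⟩ := exists_levelCyl_mem_of_ZSet_mem r s hK hZ
  have hcharged : ChargesLevel 𝒰 n := ⟨_, IsClosedEmbedding.sigmaMk.isCompact_preimage hK, hn⟩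
  obtain ⟨x, hx⟩ := exists_isLimitPath hr hs.continuous (hcharged.mono hr n.zero_le)
  exact ⟨x, hx.mem_ZSet hK hZ, hx.le_nhds⟩

/-- For a topological graph and `K ⊆ E*` compact, the cylinder set
`Z(K) = {a ∈ ∂E : a(n) ∈ K for some 0 ≤ n ≤ |a|}` is compact in the boundary path
space `∂E`. -/
theorem stmt9 {V E : Type u} (r s : E → V) [TopologicalSpace V] [TopologicalSpace E]
    [T2Space V] [T2Space E] [LocallyCompactSpace V] [LocallyCompactSpace E]
    (hr : Continuous r) (hs : IsLocalHomeomorph s)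
    (K : Set (FinPath r s)) (hK : IsCompact K) :
    IsCompact (ZSet r s K) :=
  stmt9_general r s hr hs K hK

end TopGraph
end

section
/- Let E be a topological graph and a ∈ ∂E a boundary path. The periodicity group Per(a) = { k − l ∈ ℤ : k, l ∈ ℕ₀, k, l ≤ |a|, σᵏ(a) = σˡ(a) } is nontrivial (≠ {0}) if and only if a is eventually cyclic, i.e. a = b c^∞ for some cycle c ∈ ΩE and some exit b of c. Moreover in that case, with c chosen of minimal length, Per(a) = |c|ℤ. -/
open MeasureTheory Set

namespace TopGraph

universe u
variable {V E : Type u} (r s : E → V)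

/-! A finite boundary path has trivial periodicity group, because every shift shortens it.
For an infinite path `a`, `k - l ∈ Per(a)` says that the tail of `a` from `min k l` on is
`|k - l|`-periodic, so `Per(a)` consists of the eventual periods of `a` and their negatives.
Eventual periods are closed under differences, hence under remainders, so they are the multiples
of the least positive one. An eventual period `p > 0` gives `a = b c^∞`, with `c` the `p` edges
following the earliest index from which `a` is `p`-periodic; starting there is exactly what makes
`b` an exit of `c`, since if `b` ended with `c`, periodicity would already start `p` steps earlier.
-/

open Function

section EventuallyPeriodic

variable {α : Type*}

def EventuallyPeriodic (f : ℕ → α) (p : ℕ) : Prop :=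
  ∃ l, Periodic (fun i => f (i + l)) p

lemma _root_.Function.Periodic.tail_of_le {f : ℕ → α} {p l l' : ℕ}
    (h : Periodic (fun i => f (i + l)) p) (hl : l ≤ l') : Periodic (fun i => f (i + l')) p :=
  fun i => by
    show f (i + p + l') = f (i + l')
    convert h (i + (l' - l)) using 2 <;> omega

lemma _root_.Function.Periodic.nat_sub_period {f : ℕ → α} {p q : ℕ} (hp : Periodic f p)
    (hq : Periodic f q) (hqp : q ≤ p) : Periodic f (p - q) := fun i => by
  rw [← hq, add_assoc, Nat.sub_add_cancel hqp, hp]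

lemma _root_.Function.Periodic.nat_mod_period {f : ℕ → α} {p d : ℕ} (hp : Periodic f p)
    (hd : Periodic f d) : Periodic f (p % d) := by
  rw [Nat.mod_eq_sub_mul_div, mul_comm]
  exact hp.nat_sub_period (hd.nat_mul _) (Nat.div_mul_le_self p d)

lemma eventuallyPeriodic_iff_dvd {f : ℕ → α} {d : ℕ} (hd0 : 0 < d)
    (hd : EventuallyPeriodic f d) (hmin : ∀ q, 0 < q → EventuallyPeriodic f q → d ≤ q)
    (p : ℕ) :
    EventuallyPeriodic f p ↔ d ∣ p := by
  obtain ⟨l, hl⟩ := hd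
  constructor
  · rintro ⟨l', hl'⟩
    have hmod : Periodic (fun i => f (i + max l l')) (p % d) :=
      (hl'.tail_of_le (le_max_right l l')).nat_mod_period (hl.tail_of_le (le_max_left l l'))
    refine Nat.dvd_of_mod_eq_zero (Nat.eq_zero_of_not_pos fun hpos => ?_)
    exact (hmin _ hpos ⟨_, hmod⟩).not_gt (Nat.mod_lt p hd0)
  · rintro ⟨k, rfl⟩
    exact ⟨l, by simpa [mul_comm] using hl.nat_mul k⟩

lemma eventuallyPeriodic_sub_of_shift_eq {f : ℕ → α} {k l : ℕ} (hlk : l ≤ k)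
    (h : ∀ i, f (i + k) = f (i + l)) : EventuallyPeriodic f (k - l) :=
  ⟨l, fun i => by
    show f (i + (k - l) + l) = f (i + l)
    convert h i using 2
    omega⟩

end EventuallyPeriodic

section Paths

def dropInf (a : PathInf r s) (k : ℕ) : PathInf r s :=
  ⟨fun i => a.1 (i + k), fun i => by
    show s (a.1 (i + k)) = r (a.1 (i + 1 + k))
    rw [Nat.add_right_comm]
    exact a.2 (i + k)⟩

lemma shiftC_iterate_inr (a : PathInf r s) (k : ℕ) :
    (shiftC r s)^[k] (.inr a : BPathCarrier r s) = .inr (dropInf r s a k) := by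
  induction k generalizing a with
  | zero => rfl
  | succ k ih => exact ih (dropInf r s a 1)

lemma shiftF_fst (p : FinPath r s) : (shiftF r s p).1 = p.1 - 1 := by
  match p with
  | ⟨0, _⟩ => rfl
  | ⟨1, _⟩ => rfl
  | ⟨_ + 2, _⟩ => rfl

lemma shiftF_iterate_fst (p : FinPath r s) (k : ℕ) : ((shiftF r s)^[k] p).1 = p.1 - k := by
  induction k with
  | zero => rfl
  | succ k ih => rw [iterate_succ_apply', shiftF_fst, ih, Nat.sub_sub]

lemma shiftC_iterate_inl (p : FinPath r s) (k : ℕ) :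
    (shiftC r s)^[k] (.inl p : BPathCarrier r s) = .inl ((shiftF r s)^[k] p) :=
  ((Semiconj.iterate_right (f := Sum.inl) (fun _ => rfl) k) p).symm

lemma srcFin_truncInf (a : PathInf r s) (n : ℕ) : srcFin r s (truncInf r s a n) = r (a.1 n) := by
  cases n with
  | zero => rfl
  | succ n => exact a.2 n

lemma rngFin_truncInf (a : PathInf r s) (n : ℕ) : rngFin r s (truncInf r s a n) = r (a.1 0) := by
  cases n <;> rfl

lemma edgeOf_truncInf (a : PathInf r s) {n : ℕ} (i : Fin n) :
    edgeOf r s (truncInf r s a n) i = a.1 i := by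
  cases n with
  | zero => exact i.elim0
  | succ n => rfl

lemma prepend_apply {n : ℕ} (b : PathN r s n) (d : PathInf r s) (h : srcFin r s b = r (d.1 0))
    (i : ℕ) :
    (prepend r s b d h).1 i = if hi : i < n then edgeOf r s b ⟨i, hi⟩ else d.1 (i - n) := by
  cases n with
  | zero => simp [prepend]
  | succ n => rfl

lemma prepend_apply_add {n : ℕ} (b : PathN r s n) (d : PathInf r s)
    (h : srcFin r s b = r (d.1 0)) (i : ℕ) : (prepend r s b d h).1 (i + n) = d.1 i := by
  simp [prepend_apply]

lemma cycInf_periodic {m : ℕ} (c : PathN r s (m + 1)) (hc : rngFin r s c = srcFin r s c) :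
    Periodic (cycInf r s c hc).1 (m + 1) := fun i =>
  congrArg c.1 (Fin.ext (Nat.add_mod_right i (m + 1)))

end Paths

section Per

lemma zero_mem_per (x : BPathCarrier r s) : 0 ∈ Per r s x :=
  ⟨0, 0, by simp, by simp, by simp, rfl⟩

lemma per_inl (p : FinPath r s) : Per r s (.inl p) = {0} := by
  refine Set.eq_singleton_iff_unique_mem.2 ⟨zero_mem_per r s _, ?_⟩
  rintro z ⟨k, l, hk, hl, rfl, heq⟩
  rw [shiftC_iterate_inl, shiftC_iterate_inl] at heq
  have hlen := congrArg Sigma.fst (Sum.inl.inj heq)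
  rw [shiftF_iterate_fst, shiftF_iterate_fst] at hlen
  have hk' : k ≤ p.1 := ENat.natCast_le_natCast.1 hk
  have hl' : l ≤ p.1 := ENat.natCast_le_natCast.1 hl
  omega

lemma mem_per_inr_iff (a : PathInf r s) (z : ℤ) :
    z ∈ Per r s (.inr a) ↔ EventuallyPeriodic a.1 z.natAbs := by
  constructor
  · rintro ⟨k, l, -, -, rfl, heq⟩
    rw [shiftC_iterate_inr, shiftC_iterate_inr] at heq
    have h : ∀ i, a.1 (i + k) = a.1 (i + l) := fun i => congrArg (·.1 i) (Sum.inr.inj heq)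
    rcases le_total l k with hlk | hkl
    · rw [show ((k : ℤ) - l).natAbs = k - l by omega]
      exact eventuallyPeriodic_sub_of_shift_eq hlk h
    · rw [show ((k : ℤ) - l).natAbs = l - k by omega]
      exact eventuallyPeriodic_sub_of_shift_eq hkl fun i => (h i).symm
  · rintro ⟨l, hl⟩
    have h : (shiftC r s)^[l + z.natAbs] (.inr a) = (shiftC r s)^[l] (.inr a) := by
      rw [shiftC_iterate_inr, shiftC_iterate_inr]
      exact congrArg Sum.inr
        (Subtype.ext (funext fun i => (congrArg a.1 (by omega)).trans (hl i)))
    rcases Int.natAbs_eq z with hz | hz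
    · exact ⟨l + z.natAbs, l, le_top, le_top, by omega, h⟩
    · exact ⟨l, l + z.natAbs, le_top, le_top, by omega, h.symm⟩

lemma per_inr_ne_zero_iff (a : PathInf r s) :
    Per r s (.inr a) ≠ {0} ↔ ∃ m, EventuallyPeriodic a.1 (m + 1) := by
  constructor
  · intro hne
    obtain ⟨z, hz, hz0⟩ : ∃ z ∈ Per r s (.inr a), z ≠ 0 := by
      by_contra! h
      exact hne (Set.eq_singleton_iff_unique_mem.2 ⟨zero_mem_per r s _, h⟩)
    rw [mem_per_inr_iff] at hz
    exact ⟨z.natAbs - 1, by rwa [Nat.sub_add_cancel (Int.natAbs_pos.2 hz0)]⟩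
  · rintro ⟨m, hm⟩ h
    have hmem : ((m : ℤ) + 1) ∈ Per r s (.inr a) :=
      (mem_per_inr_iff r s a _).2 (by rwa [show ((m : ℤ) + 1).natAbs = m + 1 by omega])
    rw [h, Set.mem_singleton_iff] at hmem
    omega

end Per

section EvCyclic

lemma EvCyclicWitness.eventuallyPeriodic {a : PathInf r s} {m : ℕ}
    (h : EvCyclicWitness r s (.inr a) m) : EventuallyPeriodic a.1 (m + 1) := by
  obtain ⟨c, hc, k, b, hlink, -, -, heq⟩ := h
  obtain rfl : a = prepend r s b (cycInf r s c hc) hlink := Sum.inr.inj heq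
  refine ⟨k, fun i => ?_⟩
  dsimp only
  rw [prepend_apply_add, prepend_apply_add]
  exact cycInf_periodic r s c hc i

lemma periodic_tail_sub_of_endsWith {a : PathInf r s} {l n : ℕ}
    (hends : EndsWith r s (truncInf r s a l) (truncInf r s (dropInf r s a l) n))
    (hl : Periodic (fun i => a.1 (i + l)) n) : Periodic (fun i => a.1 (i + (l - n))) n := by
  obtain ⟨hnl, hedge⟩ := hends
  intro i
  show a.1 (i + n + (l - n)) = a.1 (i + (l - n))
  rcases lt_or_ge i n with hin | hni
  · have h := hedge ⟨i, hin⟩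
    rw [edgeOf_truncInf, edgeOf_truncInf] at h
    change a.1 (l - n + i) = a.1 (i + l) at h
    convert h.symm using 2 <;> omega
  · have h := hl (i - n)
    dsimp only at h
    convert h using 2 <;> omega

lemma evCyclicWitness_of_eventuallyPeriodic {a : PathInf r s} {m : ℕ}
    (h : EventuallyPeriodic a.1 (m + 1)) : EvCyclicWitness r s (.inr a) m := by
  classical
  let l := Nat.find h
  have hl : Periodic (fun i => a.1 (i + l)) (m + 1) := Nat.find_spec h
  let c := truncInf r s (dropInf r s a l) (m + 1)
  have hc : rngFin r s c = srcFin r s c := by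
    rw [rngFin_truncInf, srcFin_truncInf]
    simpa [dropInf] using congrArg r (hl 0).symm
  have hcyc : cycInf r s c hc = dropInf r s a l :=
    Subtype.ext (funext fun i => hl.map_mod_nat i)
  have hlink : srcFin r s (truncInf r s a l) = r ((cycInf r s c hc).1 0) := by
    simp [srcFin_truncInf, hcyc, dropInf]
  refine ⟨c, hc, l, truncInf r s a l, hlink, ?_, fun hends => ?_, ?_⟩
  · rw [srcFin_truncInf, rngFin_truncInf]
    simp [dropInf]
  · exact Nat.find_min h (Nat.sub_lt_self m.succ_pos hends.1)
      (periodic_tail_sub_of_endsWith r s hends hl)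
  · refine congrArg Sum.inr (Subtype.ext (funext fun i => ?_))
    rw [prepend_apply, hcyc]
    split_ifs with hi
    · rw [edgeOf_truncInf]
    · exact congrArg a.1 (Nat.sub_add_cancel (not_lt.1 hi)).symm

lemma evCyclicWitness_inr_iff (a : PathInf r s) (m : ℕ) :
    EvCyclicWitness r s (.inr a) m ↔ EventuallyPeriodic a.1 (m + 1) :=
  ⟨EvCyclicWitness.eventuallyPeriodic r s, evCyclicWitness_of_eventuallyPeriodic r s⟩

lemma not_evCyclicWitness_inl (p : FinPath r s) (m : ℕ) : ¬ EvCyclicWitness r s (.inl p) m :=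
  fun ⟨_, _, _, _, _, _, _, h⟩ => Sum.inl_ne_inr h

end EvCyclic

theorem stmt11_general {V E : Type u} (r s : E → V) [TopologicalSpace V] [TopologicalSpace E]
    (x : BPath r s) :
    (Per r s x.val ≠ {0} ↔ ∃ m : ℕ, EvCyclicWitness r s x.val m) ∧
    (∀ m : ℕ, EvCyclicWitness r s x.val m →
      (∀ m' : ℕ, EvCyclicWitness r s x.val m' → m ≤ m') →
      Per r s x.val = {z : ℤ | ((m : ℤ) + 1) ∣ z}) := by
  obtain ⟨p | a, -⟩ := x
  · simp [per_inl, not_evCyclicWitness_inl]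
  · simp only [evCyclicWitness_inr_iff]
    refine ⟨per_inr_ne_zero_iff r s a, fun m hm hmin => Set.ext fun z => ?_⟩
    have hmin' : ∀ q, 0 < q → EventuallyPeriodic a.1 q → m + 1 ≤ q := fun q hq hpq => by
      have := hmin (q - 1) (by rwa [Nat.sub_add_cancel hq])
      omega
    rw [mem_per_inr_iff, eventuallyPeriodic_iff_dvd m.succ_pos hm hmin']
    exact_mod_cast Int.natCast_dvd.symm

/-- A boundary path has nontrivial periodicity group iff it is eventually
cyclic, i.e. of the form `b c^∞` for a cycle `c` and an exit `b` of `c`; moreover, for `c`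
chosen of minimal length, `Per(a) = |c| ℤ`. -/
theorem stmt11 {V E : Type u} (r s : E → V) [TopologicalSpace V] [TopologicalSpace E]
    [T2Space V] [T2Space E] [LocallyCompactSpace V] [LocallyCompactSpace E]
    (hr : Continuous r) (hs : IsLocalHomeomorph s) (x : BPath r s) :
    (Per r s x.val ≠ {0} ↔ ∃ m : ℕ, EvCyclicWitness r s x.val m) ∧
    (∀ m : ℕ, EvCyclicWitness r s x.val m →
      (∀ m' : ℕ, EvCyclicWitness r s x.val m' → m ≤ m') →
      Per r s x.val = {z : ℤ | ((m : ℤ) + 1) ∣ z}) :=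
  stmt11_general r s x

end TopGraph
end
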